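/- arXiv:2004.07234 — 2 statements merged into one kernel-verified Lean document; each statement's English description precedes it below -/
import Mathlib

section
/- Let g : ℝ^d → ℝ^D be three times continuously differentiable with bounded derivatives up to order 3, x ∈ ℝ^d, and for each σ > 0 let X_σ ~ N(x, σ²I_d). Then (1/σ²) Cov(g(X_σ)) converges to J_g(x) J_g(x)^T as σ → 0. -/
open MeasureTheory ProbabilityTheory

/-- The product Gaussian measure `N(x, σ²I_d)` on `ℝ^d`. -/
noncomputable def gaussianPi (d : ℕ) (x : Fin d → ℝ) (σ : ℝ) : Measure (Fin d → ℝ) :=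
  Measure.pi fun i => gaussianReal (x i) (Real.toNNReal (σ ^ 2))

/-- The covariance matrix (as a function `Fin D → Fin D → ℝ`) of the pushforward
of `μ` under `g`. -/
noncomputable def covFn {d D : ℕ} (μ : Measure (Fin d → ℝ))
    (g : (Fin d → ℝ) → (Fin D → ℝ)) : Fin D → Fin D → ℝ :=
  fun a b => ∫ y, (g y a - ∫ z, g z a ∂μ) * (g y b - ∫ z, g z b ∂μ) ∂μ

/-- The Jacobian matrix of `g` at `x`, as a function `Fin D → Fin d → ℝ`. -/
noncomputable def jacobianFn {d D : ℕ} (g : (Fin d → ℝ) → (Fin D → ℝ))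
    (x : Fin d → ℝ) : Fin D → Fin d → ℝ :=
  fun a k => fderiv ℝ g x (Pi.single k 1) a

/-! With `Z` standard Gaussian, `X_σ = x + σ Z`, so `Cov(g(X_σ)) / σ²` is the covariance of the
difference quotient `(g (x + σ Z) - g x) / σ`. Since `g` is Lipschitz, this quotient is dominated by
`K ‖Z‖ ∈ L²`, and it converges pointwise to `J_g(x) Z`; dominated convergence then gives the limit
`Cov(J_g(x) Z) = J_g(x) J_g(x)ᵀ`. -/

open Filter Topology

section DominatedCovariance

variable {Ω ι : Type*} [MeasurableSpace Ω] {μ : Measure Ω} [IsProbabilityMeasure μ]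
  {l : Filter ι} [l.IsCountablyGenerated] {X Y : ι → Ω → ℝ} {X₀ Y₀ F G : Ω → ℝ}

theorem tendsto_covariance_of_dominated (hF : MemLp F 2 μ) (hG : MemLp G 2 μ)
    (hX₀ : MemLp X₀ 2 μ) (hY₀ : MemLp Y₀ 2 μ)
    (hXm : ∀ᶠ i in l, AEStronglyMeasurable (X i) μ) (hYm : ∀ᶠ i in l, AEStronglyMeasurable (Y i) μ)
    (hXF : ∀ᶠ i in l, ∀ᵐ ω ∂μ, ‖X i ω‖ ≤ F ω) (hYG : ∀ᶠ i in l, ∀ᵐ ω ∂μ, ‖Y i ω‖ ≤ G ω)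
    (hX : ∀ᵐ ω ∂μ, Tendsto (fun i => X i ω) l (𝓝 (X₀ ω)))
    (hY : ∀ᵐ ω ∂μ, Tendsto (fun i => Y i ω) l (𝓝 (Y₀ ω))) :
    Tendsto (fun i => cov[X i, Y i; μ]) l (𝓝 cov[X₀, Y₀; μ]) := by
  have hmean {Z : ι → Ω → ℝ} {Z₀ H : Ω → ℝ} (hH : MemLp H 2 μ)
      (hZm : ∀ᶠ i in l, AEStronglyMeasurable (Z i) μ) (hZH : ∀ᶠ i in l, ∀ᵐ ω ∂μ, ‖Z i ω‖ ≤ H ω)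
      (hZ : ∀ᵐ ω ∂μ, Tendsto (fun i => Z i ω) l (𝓝 (Z₀ ω))) :
      Tendsto (fun i => μ[Z i]) l (𝓝 μ[Z₀]) :=
    tendsto_integral_filter_of_dominated_convergence H hZm hZH (hH.integrable one_le_two) hZ
  have hprod : Tendsto (fun i => μ[X i * Y i]) l (𝓝 μ[X₀ * Y₀]) := by
    refine tendsto_integral_filter_of_dominated_convergence (F * G) ?_ ?_ (hF.integrable_mul hG) ?_
    · filter_upwards [hXm, hYm] with i hXi hYi using hXi.mul hYi
    · filter_upwards [hXF, hYG] with i hXi hYi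
      filter_upwards [hXi, hYi] with ω hXω hYω
      rw [Pi.mul_apply, norm_mul]
      exact mul_le_mul hXω hYω (norm_nonneg _) ((norm_nonneg _).trans hXω)
    · filter_upwards [hX, hY] with ω hXω hYω using hXω.mul hYω
  have hmemLp {Z : ι → Ω → ℝ} {H : Ω → ℝ} (hH : MemLp H 2 μ)
      (hZm : ∀ᶠ i in l, AEStronglyMeasurable (Z i) μ) (hZH : ∀ᶠ i in l, ∀ᵐ ω ∂μ, ‖Z i ω‖ ≤ H ω) :
      ∀ᶠ i in l, MemLp (Z i) 2 μ := by
    filter_upwards [hZm, hZH] with i hZi hZHi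
    exact hH.of_le hZi (hZHi.mono fun ω h => h.trans (Real.le_norm_self _))
  rw [covariance_eq_sub hX₀ hY₀]
  refine (hprod.sub ((hmean hF hXm hXF hX).mul (hmean hG hYm hYG hY))).congr' ?_
  filter_upwards [hmemLp hF hXm hXF, hmemLp hG hYm hYG] with i hXi hYi
  rw [covariance_eq_sub hXi hYi]

end DominatedCovariance

section Slope

variable {E : Type*} [NormedAddCommGroup E] [NormedSpace ℝ E] {f : E → ℝ} {K : NNReal} {x : E}

theorem tendsto_slope_add_smul (hf : DifferentiableAt ℝ f x) (z : E) :
    Tendsto (fun σ => slope (fun t => f (x + t • z)) 0 σ) (𝓝[≠] (0 : ℝ)) (𝓝 (fderiv ℝ f x z)) := by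
  have hline : HasDerivAt (fun t : ℝ => x + t • z) z 0 := by
    simpa using ((hasDerivAt_id (0 : ℝ)).smul_const z).const_add x
  have hf0 : DifferentiableAt ℝ f (x + (0 : ℝ) • z) := by rwa [zero_smul, add_zero]
  have hcomp := hf0.hasFDerivAt.comp_hasDerivAt (0 : ℝ) hline
  rw [zero_smul, add_zero] at hcomp
  exact hasDerivAt_iff_tendsto_slope.1 hcomp

theorem LipschitzWith.abs_slope_add_smul_le (hf : LipschitzWith K f) (σ : ℝ) (z : E) :
    |slope (fun t => f (x + t • z)) 0 σ| ≤ K * ‖z‖ := by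
  rcases eq_or_ne σ 0 with rfl | hσ
  · rw [slope_same, abs_zero]
    positivity
  have h := hf.dist_le_mul (x + σ • z) x
  rw [Real.dist_eq, dist_eq_norm, add_sub_cancel_left, norm_smul, Real.norm_eq_abs] at h
  rw [slope_def_field, sub_zero, zero_smul, add_zero, abs_div]
  rw [div_le_iff₀ (abs_pos.2 hσ)]
  linarith

theorem add_mul_slope_add_smul {σ : ℝ} (hσ : σ ≠ 0) (z : E) :
    f x + σ * slope (fun t => f (x + t • z)) 0 σ = f (x + σ • z) := by
  rw [slope_def_field, sub_zero, zero_smul, add_zero, mul_div_cancel₀ _ hσ, add_sub_cancel]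

theorem LipschitzWith.continuous_slope_add_smul (hf : LipschitzWith K f) (σ : ℝ) :
    Continuous fun z => slope (fun t => f (x + t • z)) 0 σ := by
  simp only [slope_def_field]
  have := hf.continuous
  fun_prop

end Slope

section SlopeCovariance

variable {E : Type*} [NormedAddCommGroup E] [NormedSpace ℝ E] [MeasurableSpace E]
  [BorelSpace E] {μ : Measure E} {f f₁ f₂ : E → ℝ} {K K₁ K₂ : NNReal} {x : E}

theorem LipschitzWith.integrable_slope_add_smul (hμ : Integrable id μ) (hf : LipschitzWith K f)
    (σ : ℝ) : Integrable (fun z => slope (fun t => f (x + t • z)) 0 σ) μ :=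
  (hμ.norm.const_mul K).mono' (hf.continuous_slope_add_smul σ).aestronglyMeasurable
    (.of_forall fun z => hf.abs_slope_add_smul_le σ z)

theorem covariance_map_add_smul [IsProbabilityMeasure μ] (hμ : Integrable id μ)
    (hf₁ : LipschitzWith K₁ f₁) (hf₂ : LipschitzWith K₂ f₂) {σ : ℝ} (hσ : σ ≠ 0) :
    cov[f₁, f₂; μ.map fun z => x + σ • z] =
      σ ^ 2 * cov[fun z => slope (fun t => f₁ (x + t • z)) 0 σ,
        fun z => slope (fun t => f₂ (x + t • z)) 0 σ; μ] := by
  rw [covariance_map hf₁.continuous.aestronglyMeasurable hf₂.continuous.aestronglyMeasurable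
    (by fun_prop : Continuous fun z => x + σ • z).aemeasurable]
  have hcomp (f : E → ℝ) :
      f ∘ (fun z => x + σ • z) = fun z => f x + σ * slope (fun t => f (x + t • z)) 0 σ :=
    funext fun z => (add_mul_slope_add_smul hσ z).symm
  rw [hcomp, hcomp, covariance_const_add_left ((hf₁.integrable_slope_add_smul hμ σ).const_mul σ),
    covariance_const_add_right ((hf₂.integrable_slope_add_smul hμ σ).const_mul σ),
    covariance_const_mul_left, covariance_const_mul_right, ← mul_assoc, sq]

theorem tendsto_covariance_slope_add_smul [IsProbabilityMeasure μ] (hμ : MemLp id 2 μ)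
    (hf₁ : LipschitzWith K₁ f₁) (hf₂ : LipschitzWith K₂ f₂) (hd₁ : DifferentiableAt ℝ f₁ x) (hd₂ : DifferentiableAt ℝ f₂ x) :
    Tendsto (fun σ => cov[fun z => slope (fun t => f₁ (x + t • z)) 0 σ,
        fun z => slope (fun t => f₂ (x + t • z)) 0 σ; μ]) (𝓝[≠] (0 : ℝ))
      (𝓝 cov[fderiv ℝ f₁ x, fderiv ℝ f₂ x; μ]) :=
  tendsto_covariance_of_dominated (hμ.norm.const_mul K₁) (hμ.norm.const_mul K₂)
    ((fderiv ℝ f₁ x).comp_memLp' hμ) ((fderiv ℝ f₂ x).comp_memLp' hμ)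
    (.of_forall fun σ => (hf₁.continuous_slope_add_smul σ).aestronglyMeasurable)
    (.of_forall fun σ => (hf₂.continuous_slope_add_smul σ).aestronglyMeasurable)
    (.of_forall fun σ => .of_forall fun z => hf₁.abs_slope_add_smul_le σ z)
    (.of_forall fun σ => .of_forall fun z => hf₂.abs_slope_add_smul_le σ z)
    (.of_forall fun z => tendsto_slope_add_smul hd₁ z)
    (.of_forall fun z => tendsto_slope_add_smul hd₂ z)

end SlopeCovariance

section GaussianPi

variable {d : ℕ}

instance (x : Fin d → ℝ) (σ : ℝ) : IsProbabilityMeasure (gaussianPi d x σ) := by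
  unfold gaussianPi; infer_instance

theorem gaussianPi_zero_one : gaussianPi d 0 1 = Measure.pi fun _ => gaussianReal 0 1 := by
  simp [gaussianPi]

theorem gaussianReal_map_const_add_mul (m σ : ℝ) :
    (gaussianReal 0 1).map (fun t => m + σ * t) = gaussianReal m (Real.toNNReal (σ ^ 2)) := by
  have : (fun t => m + σ * t) = (fun t => m + t) ∘ (fun t => σ * t) := rfl
  rw [this, ← Measure.map_map (by fun_prop) (by fun_prop), gaussianReal_map_const_mul,
    gaussianReal_map_const_add]
  congr 1
  · ring
  · ext; simp [sq_nonneg]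

theorem gaussianPi_eq_map (x : Fin d → ℝ) (σ : ℝ) :
    gaussianPi d x σ = (gaussianPi d 0 1).map fun z => x + σ • z := by
  rw [gaussianPi_zero_one]
  change _ = (Measure.pi _).map fun z i => x i + σ * z i
  rw [Measure.pi_map_pi (f := fun i t => x i + σ * t) fun _ => by fun_prop]
  simp_rw [gaussianReal_map_const_add_mul, gaussianPi]

theorem measurePreserving_eval_gaussianPi (k : Fin d) :
    MeasurePreserving (fun z => z k) (gaussianPi d 0 1) (gaussianReal 0 1) := by
  rw [gaussianPi_zero_one]
  exact measurePreserving_eval _ k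

theorem memLp_eval_gaussianPi (k : Fin d) : MemLp (fun z => z k) 2 (gaussianPi d 0 1) :=
  (memLp_id_gaussianReal 2).comp_measurePreserving (measurePreserving_eval_gaussianPi k)

theorem memLp_id_gaussianPi : MemLp id 2 (gaussianPi d 0 1) :=
  memLp_pi_iff.2 memLp_eval_gaussianPi

theorem covariance_eval_gaussianPi (k l : Fin d) :
    cov[fun z => z k, fun z => z l; gaussianPi d 0 1] = if k = l then 1 else 0 := by
  split_ifs with hkl
  · subst hkl
    have hk := measurePreserving_eval_gaussianPi (d := d) k
    have hvar := variance_map (μ := gaussianPi d 0 1) aemeasurable_id hk.measurable.aemeasurable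
    rw [hk.map_eq, variance_id_gaussianReal] at hvar
    rw [covariance_self hk.measurable.aemeasurable]
    exact_mod_cast hvar.symm
  · have hindep : iIndepFun (fun k (z : Fin d → ℝ) => z k) (gaussianPi d 0 1) := by
      rw [gaussianPi_zero_one]
      exact iIndepFun_pi fun _ => aemeasurable_id
    exact (hindep.indepFun hkl).covariance_eq_zero (memLp_eval_gaussianPi k)
      (memLp_eval_gaussianPi l)

theorem covariance_continuousLinearMap_gaussianPi (L L' : (Fin d → ℝ) →L[ℝ] ℝ) :
    cov[L, L'; gaussianPi d 0 1] = ∑ k, L (Pi.single k 1) * L' (Pi.single k 1) := by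
  have hsum (L : (Fin d → ℝ) →L[ℝ] ℝ) : ⇑L = fun z => ∑ k, z k * L (Pi.single k 1) := by
    ext z
    conv_lhs => rw [← Finset.univ_sum_single z]
    simp only [map_sum]
    congr! 1 with k
    rw [← smul_eq_mul, ← map_smul, ← Pi.single_smul, smul_eq_mul, mul_one]
  have hmem (L : (Fin d → ℝ) →L[ℝ] ℝ) (k : Fin d) :
      MemLp (fun z => z k * L (Pi.single k 1)) 2 (gaussianPi d 0 1) :=
    (memLp_eval_gaussianPi k).mul_const _
  conv_lhs => rw [hsum L, hsum L']
  simp_rw [covariance_fun_sum_fun_sum (hmem L) (hmem L'), covariance_mul_const_left,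
    covariance_mul_const_right, covariance_eval_gaussianPi]
  simp [mul_comm]

theorem tendsto_inv_sq_mul_covariance_gaussianPi {x : Fin d → ℝ} {f₁ f₂ : (Fin d → ℝ) → ℝ}
    {K₁ K₂ : NNReal} (hf₁ : LipschitzWith K₁ f₁) (hf₂ : LipschitzWith K₂ f₂)
    (hd₁ : DifferentiableAt ℝ f₁ x) (hd₂ : DifferentiableAt ℝ f₂ x) :
    Tendsto (fun σ => (σ ^ 2)⁻¹ * cov[f₁, f₂; gaussianPi d x σ]) (𝓝[>] 0)
      (𝓝 (∑ k, fderiv ℝ f₁ x (Pi.single k 1) * fderiv ℝ f₂ x (Pi.single k 1))) := by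
  rw [← covariance_continuousLinearMap_gaussianPi]
  refine ((tendsto_covariance_slope_add_smul memLp_id_gaussianPi hf₁ hf₂ hd₁ hd₂).mono_left
    (nhdsGT_le_nhdsNE 0)).congr' ?_
  filter_upwards [self_mem_nhdsWithin] with σ hσ
  rw [gaussianPi_eq_map x σ, covariance_map_add_smul (memLp_id_gaussianPi.integrable one_le_two)
    hf₁ hf₂ hσ.ne', inv_mul_cancel_left₀ (pow_ne_zero 2 hσ.ne')]

end GaussianPi

theorem LipschitzWith.of_norm_iteratedFDeriv_one_le {E F : Type*} [NormedAddCommGroup E]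
    [NormedSpace ℝ E] [NormedAddCommGroup F] [NormedSpace ℝ F] {f : E → F} {M : ℝ}
    (hf : Differentiable ℝ f) (hM : ∀ y, ‖iteratedFDeriv ℝ 1 f y‖ ≤ M) :
    LipschitzWith M.toNNReal f :=
  lipschitzWith_of_nnnorm_fderiv_le hf fun y => by
    rw [← NNReal.coe_le_coe, coe_nnnorm, ← norm_iteratedFDeriv_one]
    exact (hM y).trans (Real.le_coe_toNNReal M)

theorem covFn_apply {d D : ℕ} (μ : Measure (Fin d → ℝ)) (g : (Fin d → ℝ) → (Fin D → ℝ))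
    (a b : Fin D) : covFn μ g a b = cov[fun y => g y a, fun y => g y b; μ] :=
  rfl

/-- `(1/σ²) Cov(g(X_σ)) → J_g(x) J_g(x)ᵀ` as `σ → 0⁺`. -/
theorem cov_pushforward_gaussian_tendsto (d D : ℕ)
    (g : (Fin d → ℝ) → (Fin D → ℝ)) (hg : ContDiff ℝ 3 g)
    (hbd : ∀ n : ℕ, n ≤ 3 → ∃ M : ℝ, ∀ y, ‖iteratedFDeriv ℝ n g y‖ ≤ M)
    (x : Fin d → ℝ) :
    Filter.Tendsto (fun σ : ℝ => (σ ^ 2)⁻¹ • covFn (gaussianPi d x σ) g)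
      (nhdsWithin 0 (Set.Ioi 0))
      (nhds (fun a b => ∑ k, jacobianFn g x a k * jacobianFn g x b k)) := by
  obtain ⟨M, hM⟩ := hbd 1 (by norm_num)
  have hgd : Differentiable ℝ g := hg.differentiable (by norm_num)
  have hlip := LipschitzWith.of_norm_iteratedFDeriv_one_le hgd hM
  refine tendsto_pi_nhds.2 fun a => tendsto_pi_nhds.2 fun b => ?_
  have hjac (c : Fin D) (k : Fin d) :
      fderiv ℝ (fun y => g y c) x (Pi.single k 1) = jacobianFn g x c k := by
    rw [fderiv_apply (hgd x)]
    rfl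
  simpa only [Pi.smul_apply, smul_eq_mul, covFn_apply, hjac] using
    tendsto_inv_sq_mul_covariance_gaussianPi (f₁ := fun y => g y a) (f₂ := fun y => g y b)
      ((LipschitzWith.eval a).comp hlip) ((LipschitzWith.eval b).comp hlip)
      (differentiableAt_pi.1 (hgd x) a) (differentiableAt_pi.1 (hgd x) b)
end

section
/- Let h : U → ℝ^d be a C¹ map on a connected open set U ⊆ ℝ^d whose Jacobian satisfies J_h(x)^T J_h(x) = I_d for all x ∈ U. Then h is a rigid motion restricted to U: there exist an orthogonal matrix Q ∈ O(d) and a vector c ∈ ℝ^d such that h(x) = Qx + c for all x ∈ U. -/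
/-!
Near each point of `U`, `h` is `1`-Lipschitz by the mean value inequality, and so is its local
inverse from the inverse function theorem, whose differential is the inverse of an isometry;
hence `h` preserves distances near every point. By polarization it then preserves the inner
products `⟪a - x₀, b - x₀⟫`, and differentiating in `b` at `x₀` shows that `h` coincides near `x₀`
with its affine approximation at `x₀`. So `fderiv ℝ h` is locally constant, hence constant on the
connected set `U`, and `h` is affine on `U` with an orthogonal linear part.
-/

open RealInnerProductSpace Filter Topology Metric

section Metric

variable {X Y : Type*} [PseudoMetricSpace X] [PseudoMetricSpace Y]

theorem exists_mem_nhds_dist_eq_of_lipschitzOnWith_leftInverse {f : X → Y} {g : Y → X}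
    {x₀ : X} {s : Set X} {t : Set Y} (hs : s ∈ 𝓝 x₀) (hf : LipschitzOnWith 1 f s)
    (ht : t ∈ 𝓝 (f x₀)) (hg : LipschitzOnWith 1 g t) (hgf : ∀ᶠ x in 𝓝 x₀, g (f x) = x) :
    ∃ u ∈ 𝓝 x₀, ∀ a ∈ u, ∀ b ∈ u, dist (f a) (f b) = dist a b := by
  have hft : ∀ᶠ x in 𝓝 x₀, f x ∈ t := (hf.continuousOn.continuousAt hs).eventually_mem ht
  refine ⟨_, inter_mem hs (hft.and hgf), fun a ⟨has, hat, hga⟩ b ⟨hbs, hbt, hgb⟩ => ?_⟩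
  refine le_antisymm (by simpa using hf.dist_le_mul a has b hbs) ?_
  calc dist a b = dist (g (f a)) (g (f b)) := by rw [hga, hgb]
    _ ≤ dist (f a) (f b) := by simpa using hg.dist_le_mul _ hat _ hbt

end Metric

section Normed

variable {E F : Type*} [NormedAddCommGroup E] [NormedSpace ℝ E]
  [NormedAddCommGroup F] [NormedSpace ℝ F]

theorem Convex.lipschitzOnWith_one_of_norm_fderiv_apply_le {f : E → F} {s : Set E}
    (hs : Convex ℝ s) (hf : ∀ x ∈ s, DifferentiableAt ℝ f x)
    (hle : ∀ x ∈ s, ∀ v, ‖fderiv ℝ f x v‖ ≤ ‖v‖) : LipschitzOnWith 1 f s :=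
  hs.lipschitzOnWith_of_nnnorm_fderiv_le hf fun x hx =>
    ContinuousLinearMap.opNNNorm_le_bound _ _ fun v => by
      simpa [← NNReal.coe_le_coe] using hle x hx v

theorem norm_fderiv_apply_eq_of_eventually_leftInverse {f : E → F} {g : F → E} {y : F}
    (hfg : ∀ᶠ z in 𝓝 y, f (g z) = z) (hf : DifferentiableAt ℝ f (g y))
    (hg : DifferentiableAt ℝ g y) (hnorm : ∀ v, ‖fderiv ℝ f (g y) v‖ = ‖v‖) (v : F) :
    ‖fderiv ℝ g y v‖ = ‖v‖ := by
  have hcomp : (fderiv ℝ f (g y)).comp (fderiv ℝ g y) = ContinuousLinearMap.id ℝ F :=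
    (hf.hasFDerivAt.comp y hg.hasFDerivAt).unique ((hasFDerivAt_id y).congr_of_eventuallyEq hfg)
  rw [← hnorm, ← ContinuousLinearMap.comp_apply, hcomp, ContinuousLinearMap.id_apply]

variable [CompleteSpace E]

theorem exists_leftInverse_lipschitzOnWith_one_of_fderiv_isometry {f : E → F} {e : E ≃L[ℝ] F}
    {x₀ : E} (hf : ContDiffAt ℝ 1 f x₀) (hf' : HasFDerivAt f (e : E →L[ℝ] F) x₀)
    (hnorm : ∀ᶠ x in 𝓝 x₀, ∀ v, ‖fderiv ℝ f x v‖ = ‖v‖) :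
    ∃ g : F → E, (∀ᶠ x in 𝓝 x₀, g (f x) = x) ∧ ∃ t ∈ 𝓝 (f x₀), LipschitzOnWith 1 g t := by
  have hstrict := hf.hasStrictFDerivAt' hf' one_ne_zero
  set g := hf.localInverse hf' one_ne_zero
  have hg : ContDiffAt ℝ 1 g (f x₀) := hf.to_localInverse hf' one_ne_zero
  have hgf : g (f x₀) = x₀ := hf.localInverse_apply_image hf' one_ne_zero
  have hf_near : ∀ᶠ x in 𝓝 x₀, DifferentiableAt ℝ f x ∧ ∀ v, ‖fderiv ℝ f x v‖ = ‖v‖ :=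
    ((hf.eventually (by simp)).mono fun x hx => hx.differentiableAt one_ne_zero).and hnorm
  have hg_near : ∀ᶠ y in 𝓝 (f x₀), (∀ᶠ z in 𝓝 y, f (g z) = z) ∧ DifferentiableAt ℝ g y ∧
      DifferentiableAt ℝ f (g y) ∧ ∀ v, ‖fderiv ℝ f (g y) v‖ = ‖v‖ := by
    refine hstrict.eventually_right_inverse.eventually_nhds.and
      (((hg.eventually (by simp)).mono fun y hy => hy.differentiableAt one_ne_zero).and ?_)
    exact hg.continuousAt.eventually (hgf ▸ hf_near)
  obtain ⟨δ, hδ, hball⟩ := eventually_nhds_iff_ball.mp hg_near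
  refine ⟨g, hstrict.eventually_left_inverse, ball (f x₀) δ, ball_mem_nhds _ hδ,
    (convex_ball _ _).lipschitzOnWith_one_of_norm_fderiv_apply_le
      (fun y hy => (hball y hy).2.1) fun y hy v => ?_⟩
  obtain ⟨hfg, hgy, hfy, hnormy⟩ := hball y hy
  exact (norm_fderiv_apply_eq_of_eventually_leftInverse hfg hfy hgy hnormy v).le

end Normed

theorem exists_mem_nhds_dist_eq_of_fderiv_isometry {E : Type*} [NormedAddCommGroup E]
    [NormedSpace ℝ E] [FiniteDimensional ℝ E] {f : E → E} {U : Set E} (hU : IsOpen U)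
    (hf : ContDiffOn ℝ 1 f U) (hnorm : ∀ x ∈ U, ∀ v, ‖fderiv ℝ f x v‖ = ‖v‖) {x₀ : E}
    (hx₀ : x₀ ∈ U) : ∃ u ∈ 𝓝 x₀, ∀ a ∈ u, ∀ b ∈ u, dist (f a) (f b) = dist a b := by
  have hfx₀ : ContDiffAt ℝ 1 f x₀ := hf.contDiffAt (hU.mem_nhds hx₀)
  -- in finite dimension the isometric embedding `fderiv ℝ f x₀` is onto
  let e : E ≃L[ℝ] E := (LinearIsometry.toLinearIsometryEquiv
    ⟨(fderiv ℝ f x₀).toLinearMap, hnorm x₀ hx₀⟩ rfl).toContinuousLinearEquiv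
  obtain ⟨g, hgf, t, ht, hg⟩ := exists_leftInverse_lipschitzOnWith_one_of_fderiv_isometry
    (e := e) hfx₀ (hfx₀.differentiableAt one_ne_zero).hasFDerivAt
    ((hU.eventually_mem hx₀).mono hnorm)
  obtain ⟨ε, hε, hballU⟩ := isOpen_iff.mp hU x₀ hx₀
  exact exists_mem_nhds_dist_eq_of_lipschitzOnWith_leftInverse (ball_mem_nhds x₀ hε)
    ((convex_ball x₀ ε).lipschitzOnWith_one_of_norm_fderiv_apply_le
      (fun x hx => (hf.contDiffAt (hU.mem_nhds (hballU hx))).differentiableAt one_ne_zero)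
      fun x hx v => (hnorm x (hballU hx) v).le) ht hg hgf

section InnerProduct

variable {E F : Type*} [NormedAddCommGroup E] [InnerProductSpace ℝ E]
  [NormedAddCommGroup F] [InnerProductSpace ℝ F]

theorem eventuallyEq_affine_of_dist_eq {f : E → F} {A : E →L[ℝ] F} {x₀ : E} {u : Set E}
    (hu : u ∈ 𝓝 x₀) (hdist : ∀ a ∈ u, ∀ b ∈ u, dist (f a) (f b) = dist a b)
    (hf : HasFDerivAt f A x₀) (hA : ∀ v, ‖A v‖ = ‖v‖) :
    f =ᶠ[𝓝 x₀] fun x => f x₀ + A (x - x₀) := by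
  have hx₀ : x₀ ∈ u := mem_of_mem_nhds hu
  filter_upwards [hu] with a ha
  have hnorm : ‖f a - f x₀‖ = ‖a - x₀‖ := by simpa [dist_eq_norm] using hdist a ha x₀ hx₀
  have hinner : ∀ᶠ b in 𝓝 x₀, ⟪f a - f x₀, f b - f x₀⟫ = ⟪a - x₀, b - x₀⟫ := by
    filter_upwards [hu] with b hb
    simp only [real_inner_eq_norm_mul_self_add_norm_mul_self_sub_norm_sub_mul_self_div_two,
      sub_sub_sub_cancel_right, ← dist_eq_norm, hdist a ha x₀ hx₀, hdist b hb x₀ hx₀,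
      hdist a ha b hb]
  have hderiv : ∀ v, ⟪f a - f x₀, A v⟫ = ⟪a - x₀, v⟫ := by
    have hL : HasFDerivAt (fun b => ⟪f a - f x₀, f b - f x₀⟫)
        ((innerSL ℝ (f a - f x₀)).comp A) x₀ :=
      (innerSL ℝ (f a - f x₀)).hasFDerivAt.comp x₀ (hf.sub_const _)
    have hR : HasFDerivAt (fun b => ⟪a - x₀, b - x₀⟫) (innerSL ℝ (a - x₀)) x₀ :=
      (innerSL ℝ (a - x₀)).hasFDerivAt.comp x₀ ((hasFDerivAt_id x₀).sub_const _)
    intro v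
    exact congr($(hL.unique (hR.congr_of_eventuallyEq hinner)) v)
  have hsq : ‖f a - f x₀ - A (a - x₀)‖ ^ 2 = 0 := by
    rw [norm_sub_sq_real, hderiv, hnorm, hA, real_inner_self_eq_norm_sq]
    ring
  rw [sq_eq_zero_iff, norm_eq_zero, sub_eq_zero] at hsq
  exact eq_add_of_sub_eq' hsq

end InnerProduct

/-- Liouville-type rigidity: a C¹ map on a connected open set
`U ⊆ ℝ^d` whose Jacobian satisfies `J_h(x)ᵀ J_h(x) = I_d` everywhere on `U`
(i.e. its differential preserves inner products) is the restriction of a rigid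
motion: `h(x) = Qx + c` with `Q` orthogonal. -/
theorem rigidity_of_jacobian_orthogonal (d : ℕ)
    (U : Set (EuclideanSpace ℝ (Fin d))) (hUopen : IsOpen U) (hUconn : IsConnected U)
    (h : EuclideanSpace ℝ (Fin d) → EuclideanSpace ℝ (Fin d))
    (hC1 : ContDiffOn ℝ 1 h U)
    (hiso : ∀ x ∈ U, ∀ v w : EuclideanSpace ℝ (Fin d),
      ⟪fderiv ℝ h x v, fderiv ℝ h x w⟫ = ⟪v, w⟫) :
    ∃ (Q : EuclideanSpace ℝ (Fin d) ≃ₗᵢ[ℝ] EuclideanSpace ℝ (Fin d))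
      (c : EuclideanSpace ℝ (Fin d)), ∀ x ∈ U, h x = Q x + c := by
  have hdiff : DifferentiableOn ℝ h U := hC1.differentiableOn one_ne_zero
  have hnorm : ∀ x ∈ U, ∀ v, ‖fderiv ℝ h x v‖ = ‖v‖ := fun x hx =>
    ((fderiv ℝ h x).toLinearMap.isometryOfInner (hiso x hx)).norm_map
  have haffine : ∀ x ∈ U, h =ᶠ[𝓝 x] fun y => h x + fderiv ℝ h x (y - x) := fun x hx => by
    obtain ⟨u, hu, hdist⟩ := exists_mem_nhds_dist_eq_of_fderiv_isometry hUopen hC1 hnorm hx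
    exact eventuallyEq_affine_of_dist_eq hu hdist
      (hdiff.differentiableAt (hUopen.mem_nhds hx)).hasFDerivAt (hnorm x hx)
  have hDlocal : ∀ x ∈ U, ∀ᶠ y in 𝓝 x, fderiv ℝ h x = fderiv ℝ h y := fun x hx =>
    (haffine x hx).eventuallyEq_nhds.mono fun y hy => by simp [hy.fderiv_eq, fderiv_sub_const]
  have hDconst : ∀ x ∈ U, ∀ y ∈ U, fderiv ℝ h x = fderiv ℝ h y := fun x hx y hy =>
    hUconn.isPreconnected.induction₂ _ (fun z hz => nhdsWithin_le_nhds (hDlocal z hz))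
      (fun _ _ _ _ _ _ => Eq.trans) (fun _ _ _ _ => Eq.symm) hx hy
  obtain ⟨x₀, hx₀⟩ := hUconn.nonempty
  set A := fderiv ℝ h x₀
  refine ⟨(A.toLinearMap.isometryOfInner (hiso x₀ hx₀)).toLinearIsometryEquiv rfl,
    h x₀ - A x₀, fun x hx => ?_⟩
  refine hUopen.eqOn_of_fderiv_eq hUconn.isPreconnected hdiff
    (A.differentiableOn.add_const _) (fun y hy => ?_) hx₀ (by simp) hx
  rw [(A.hasFDerivAt.add_const _).fderiv]
  exact hDconst y hy x₀ hx₀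
end
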